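/- arXiv:2105.14202 — 6 statements merged into one kernel-verified Lean document; each statement's English description precedes it below -/
import Mathlib

section
/- Let x ∈ ℝ, α > 0, and f⁰ ∈ ℝ with f⁰ < x. Define the sign-gradient iteration f^{j+1} = f^j − α·sgn(f^j − x) for j ∈ ℕ. If (x − f⁰)/α is not an integer, then the sequence (f^j)_{j∈ℕ} does not converge to x. (Proposition 1 of the paper: the optimization problem min_f | |x−f| − y | basically cannot converge to the optimal value using the sign gradient via gradient descent.) -/
/-- Proposition 1: the sign-gradient iteration `f^{j+1} = f^j - α·sgn(f^j - x)`
starting below `x` does not converge to `x` when `(x - f⁰)/α` is not an integer. -/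
theorem sign_gradient_not_convergent
    (x α f0 : ℝ) (hα : 0 < α) (hf0 : f0 < x)
    (f : ℕ → ℝ) (h0 : f 0 = f0)
    (hstep : ∀ j : ℕ, f (j + 1) = f j - α * Real.sign (f j - x))
    (hnotint : ∀ m : ℤ, (x - f0) / α ≠ (m : ℝ)) :
    ¬ Filter.Tendsto f Filter.atTop (nhds x) := by
  set c : ℝ := (x - f0) / α with hc
  have hmult : ∀ j : ℕ, ∃ m : ℤ, f j = f0 + m * α := by
    intro j
    induction j with
    | zero => exact ⟨0, by simp [h0]⟩
    | succ n ih =>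
      obtain ⟨m, hm⟩ := ih
      rcases Real.sign_apply_eq (f n - x) with h | h | h
      · exact ⟨m + 1, by rw [hstep n, h, hm]; push_cast; ring⟩
      · exact ⟨m, by rw [hstep n, h, hm]; ring⟩
      · exact ⟨m - 1, by rw [hstep n, h, hm]; push_cast; ring⟩
  have hfr0 : Int.fract c ≠ 0 := by
    intro h
    exact hnotint ⌊c⌋ (by have h2 := Int.self_sub_floor c; linarith)
  have hfr_pos : 0 < Int.fract c := lt_of_le_of_ne (Int.fract_nonneg c) (Ne.symm hfr0)
  have hfr_lt : Int.fract c < 1 := Int.fract_lt_one c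
  set ε : ℝ := min (Int.fract c) (1 - Int.fract c) with hε
  have hεpos : 0 < ε := lt_min hfr_pos (by linarith)
  have key : ∀ j : ℕ, α * ε ≤ |f j - x| := by
    intro j
    obtain ⟨m, hm⟩ := hmult j
    have hxm : f j - x = α * ((m : ℝ) - c) := by
      rw [hm, hc]; field_simp; ring
    rw [hxm, abs_mul, abs_of_pos hα]
    have : ε ≤ |(m : ℝ) - c| := by
      rcases le_or_gt (m : ℝ) ⌊c⌋ with h | h
      · have h1 : c - (m : ℝ) ≥ Int.fract c := by
          have := Int.self_sub_floor c; linarith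
        rw [abs_sub_comm, abs_of_pos (by linarith [min_le_left (Int.fract c) (1 - Int.fract c)] : (0:ℝ) < c - m)]
        exact le_trans (min_le_left _ _) h1
      · have hm1 : (⌊c⌋ : ℝ) + 1 ≤ (m : ℝ) := by exact_mod_cast Int.add_one_le_iff.mpr (by exact_mod_cast h)
        have h1 : (m : ℝ) - c ≥ 1 - Int.fract c := by
          have := Int.self_sub_floor c; linarith
        rw [abs_of_pos (by linarith : (0:ℝ) < (m : ℝ) - c)]
        exact le_trans (min_le_right _ _) h1
    nlinarith
  intro htend
  obtain ⟨N, hN⟩ := Metric.tendsto_atTop.mp htend (α * ε) (by positivity)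
  have := hN N le_rfl
  rw [Real.dist_eq] at this
  linarith [key N]
end

section
/- Let x ∈ ℝ, α > 0, and f⁰ ∈ ℝ with f⁰ < x, and define the sign-gradient iteration f^{j+1} = f^j − α·sgn(f^j − x). Assume (x − f⁰)/α is not an integer and set t = ⌊(x − f⁰)/α⌋. Then f^j = f⁰ + jα for all j ≤ t + 1, and for all k ∈ ℕ one has f^{t+2k} = f⁰ + tα < x < f⁰ + (t+1)α = f^{t+2k+1}; in particular the sequence oscillates between two fixed values from index t onward. -/
/-- Oscillation of the sign-gradient iteration: with `t = ⌊(x - f⁰)/α⌋`, the iterates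
increase by `α` up to step `t + 1` and then oscillate between `f⁰ + tα` and `f⁰ + (t+1)α`,
which straddle `x`. -/
theorem sign_gradient_oscillates
    (x α f0 : ℝ) (hα : 0 < α) (hf0 : f0 < x)
    (f : ℕ → ℝ) (h0 : f 0 = f0)
    (hstep : ∀ j : ℕ, f (j + 1) = f j - α * Real.sign (f j - x))
    (hnotint : ∀ m : ℤ, (x - f0) / α ≠ (m : ℝ))
    (t : ℕ) (ht : (t : ℤ) = ⌊(x - f0) / α⌋) :
    (∀ j ≤ t + 1, f j = f0 + j * α) ∧
    f0 + t * α < x ∧ x < f0 + (t + 1) * α ∧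
    (∀ k : ℕ, f (t + 2 * k) = f0 + t * α ∧ f (t + 2 * k + 1) = f0 + (t + 1) * α) := by
  have hq1 : (t : ℝ) < (x - f0) / α := by
    have hle : ((t : ℤ) : ℝ) ≤ (x - f0) / α := ht ▸ Int.floor_le _
    have : ((t : ℤ) : ℝ) ≠ (x - f0) / α := fun h => hnotint t h.symm
    push_cast at hle this ⊢
    exact lt_of_le_of_ne hle this
  have hq2 : (x - f0) / α < (t : ℝ) + 1 := by
    have := ht ▸ Int.lt_floor_add_one ((x - f0) / α)
    push_cast at this
    exact this
  have hlow : f0 + t * α < x := by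
    have := (lt_div_iff₀ hα).mp hq1
    linarith
  have hhigh : x < f0 + (t + 1) * α := by
    have := (div_lt_iff₀ hα).mp hq2
    linarith
  have hlin : ∀ j ≤ t + 1, f j = f0 + j * α := by
    intro j hj
    induction j with
    | zero => simpa using h0
    | succ n ih =>
      have hn : n ≤ t := Nat.lt_succ_iff.mp hj
      have hfn : f n = f0 + n * α := ih (le_trans hn (Nat.le_succ t))
      have hneg : f n - x < 0 := by
        have : (n : ℝ) * α ≤ (t : ℝ) * α := by
          have : (n : ℝ) ≤ (t : ℝ) := by exact_mod_cast hn
          nlinarith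
        rw [hfn]; linarith
      rw [hstep n, Real.sign_of_neg hneg, hfn]
      push_cast; ring
  refine ⟨hlin, hlow, hhigh, ?_⟩
  intro k
  induction k with
  | zero =>
    refine ⟨?_, ?_⟩
    · simpa using hlin t (Nat.le_succ t)
    · simpa using hlin (t + 1) le_rfl
  | succ m ih =>
    obtain ⟨h1, h2⟩ := ih
    have hpos : f (t + 2 * m + 1) - x > 0 := by rw [h2]; linarith
    have hA : f (t + 2 * (m + 1)) = f0 + t * α := by
      have : t + 2 * (m + 1) = (t + 2 * m + 1) + 1 := by ring
      rw [this, hstep, Real.sign_of_pos hpos, h2]; ring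
    have hneg : f (t + 2 * (m + 1)) - x < 0 := by rw [hA]; linarith
    have hB : f (t + 2 * (m + 1) + 1) = f0 + (t + 1) * α := by
      rw [hstep, Real.sign_of_neg hneg, hA]; ring
    exact ⟨hA, hB⟩
end

section
/- Let x ∈ ℝ, α > 0, and f⁰ ∈ ℝ with f⁰ < x, and define the sign-gradient iteration f^{j+1} = f^j − α·sgn(f^j − x). If (x − f⁰)/α = m for some positive integer m, then f^j = f⁰ + jα for all j ≤ m and f^j = x for all j ≥ m; in particular the sequence converges to x. (The convergence criterion in the proof of Proposition 1: f^j converges to x if and only if (x − f⁰)/α ∈ ℤ.) -/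
/-- Convergence criterion for the sign-gradient iteration: if `(x - f⁰)/α` is a positive
integer `m`, then the iterates increase by `α` up to step `m`, stay equal to `x` afterwards,
and hence converge to `x`. -/
theorem sign_gradient_convergent_of_integer
    (x α f0 : ℝ) (hα : 0 < α) (hf0 : f0 < x)
    (f : ℕ → ℝ) (h0 : f 0 = f0)
    (hstep : ∀ j : ℕ, f (j + 1) = f j - α * Real.sign (f j - x))
    (m : ℕ) (hm : 0 < m) (heq : (x - f0) / α = (m : ℝ)) :
    (∀ j ≤ m, f j = f0 + j * α) ∧ (∀ j : ℕ, m ≤ j → f j = x) ∧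
    Filter.Tendsto f Filter.atTop (nhds x) := by
  have hx : x - f0 = m * α := by
    field_simp at heq; linarith
  have h1 : ∀ j ≤ m, f j = f0 + j * α := by
    intro j hj
    induction j with
    | zero => simpa using h0
    | succ k ih =>
      have hk : k ≤ m := Nat.le_of_succ_le hj
      have hik := ih hk
      have hlt : f k - x < 0 := by
        have : (k : ℝ) < m := by exact_mod_cast Nat.lt_of_succ_le hj
        rw [hik]
        nlinarith
      rw [hstep k, Real.sign_of_neg hlt, hik]
      push_cast
      ring
  have hfm : f m = x := by
    have := h1 m le_rfl
    rw [this]; linarith [hx]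
  have h2 : ∀ j, m ≤ j → f j = x := by
    intro j hj
    induction j with
    | zero => omega
    | succ k ih =>
      rcases Nat.lt_or_ge m (k + 1) with h | h
      · have hfk := ih (Nat.lt_succ_iff.mp h)
        rw [hstep k, hfk]
        simp
      · have : m = k + 1 := le_antisymm hj h
        rw [← this]; exact hfm
  refine ⟨h1, h2, ?_⟩
  have : ∀ᶠ j in Filter.atTop, f j = x := Filter.eventually_atTop.2 ⟨m, h2⟩
  exact Filter.Tendsto.congr' (Filter.EventuallyEq.symm this) tendsto_const_nhds
end

section
/- Universal approximation of two-layer AdderNets (Theorem 1): Let d ∈ ℕ, let K ⊆ ℝ^d be a compact set, and let f: ℝ^d → ℝ be integrable on K. Then for every ε > 0 there exist t ∈ ℕ, scalars a₁,…,a_t ∈ ℝ, b₁,…,b_t ∈ ℝ, and vectors W₁,…,W_t ∈ ℝ^d such that ∫_K | f(x) − Σ_{i=1}^t aᵢ · ReLU(‖Wᵢ − x‖₁ + bᵢ) | dx ≤ ε, where the integral is with respect to Lebesgue measure on ℝ^d. (By Lemma 1, every function of the form Σᵢ aᵢ ReLU(‖Wᵢ − x‖₁ + bᵢ) is realized by a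 two-layer AdderNet on K, so two-layer AdderNets are dense in L¹(K).) -/
/-!
Neurons with the same centre `c` and biases `1` and `0` differ by the constant `1`, and four
neurons centred at `c` combine into the piecewise-linear radial function equal to `1` on
`closedBall c r` and to `0` outside `closedBall c R`. Letting `R ↓ r` puts the indicators of
closed balls in the `Lᵖ`-closure of the span of the neurons. By the Besicovitch covering theorem
an open set is, up to a small set, a finite disjoint union of closed balls; outer regularity
passes to measurable sets, and indicators of measurable sets span a dense subspace of `Lᵖ`.
-/

open MeasureTheory Set Metric Filter
open scoped ENNReal Topology symmDiff

namespace MeasureTheory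

variable {α : Type*} [MeasurableSpace α] {p : ℝ≥0∞} {μ : Measure α}

def _root_.Submodule.toLp (S : Submodule ℝ (α → ℝ)) (p : ℝ≥0∞) [Fact (1 ≤ p)]
    (μ : Measure α) : Submodule ℝ (Lp ℝ p μ) where
  carrier := {F | ∃ g ∈ S, F =ᵐ[μ] g}
  zero_mem' := ⟨0, S.zero_mem, Lp.coeFn_zero ℝ p μ⟩
  add_mem' := by
    rintro F G ⟨f, hf, hFf⟩ ⟨g, hg, hGg⟩
    exact ⟨f + g, S.add_mem hf hg, (Lp.coeFn_add F G).trans (hFf.add hGg)⟩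
  smul_mem' := by
    rintro c F ⟨f, hf, hFf⟩
    exact ⟨c • f, S.smul_mem c hf, (Lp.coeFn_smul c F).trans (hFf.const_smul c)⟩

theorem indicatorConstLp_eq_smul_one [Fact (1 ≤ p)] {s : Set α} (hs : MeasurableSet s)
    (hμs : μ s ≠ ∞) (c : ℝ) :
    indicatorConstLp p hs hμs c = c • indicatorConstLp p hs hμs (1 : ℝ) := by
  ext1
  filter_upwards [indicatorConstLp_coeFn (p := p) (hs := hs) (hμs := hμs) (c := c),
    indicatorConstLp_coeFn (p := p) (hs := hs) (hμs := hμs) (c := (1 : ℝ)),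
    Lp.coeFn_smul c (indicatorConstLp p hs hμs (1 : ℝ))] with x hc h1 hsmul
  by_cases hx : x ∈ s <;> simp [hc, h1, hsmul, hx]

theorem _root_.Submodule.eq_top_of_indicatorConstLp_one_mem [Fact (1 ≤ p)] (hp : p ≠ ∞)
    {C : Submodule ℝ (Lp ℝ p μ)} (hC : IsClosed (C : Set (Lp ℝ p μ)))
    (h : ∀ s (hs : MeasurableSet s) (hμs : μ s ≠ ∞), indicatorConstLp p hs hμs (1 : ℝ) ∈ C) :
    C = ⊤ := by
  refine (Submodule.eq_top_iff'.2 fun F => Lp.induction hp (· ∈ C) (fun c s hs hμs => ?_)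
    (fun _ _ _ _ _ hf hg => C.add_mem hf hg) hC F)
  rw [Lp.simpleFunc.coe_indicatorConst, indicatorConstLp_eq_smul_one]
  exact C.smul_mem c (h s hs hμs.ne)

theorem indicatorConstLp_mem_of_forall_measure_symmDiff_lt {E : Type*} [NormedAddCommGroup E]
    [Fact (1 ≤ p)] (hp : p ≠ ∞) {C : Set (Lp E p μ)} (hC : IsClosed C) {s : Set α}
    (hs : MeasurableSet s) (hμs : μ s ≠ ∞) (c : E)
    (h : ∀ ε > 0, ∃ t, ∃ (ht : MeasurableSet t) (hμt : μ t ≠ ∞),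
      indicatorConstLp p ht hμt c ∈ C ∧ μ (t ∆ s) < ε) :
    indicatorConstLp p hs hμs c ∈ C := by
  choose t ht hμt htC hts using fun n : ℕ => h (n : ℝ≥0∞)⁻¹ (by simp)
  refine hC.mem_of_tendsto (tendsto_indicatorConstLp_set hp ?_)
    (Eventually.of_forall (f := atTop) htC)
  exact tendsto_of_tendsto_of_tendsto_of_le_of_le tendsto_const_nhds
    ENNReal.tendsto_inv_nat_nhds_zero (fun _ => bot_le) fun n => (hts n).le

theorem indicatorConstLp_biUnion_mem {E : Type*} [NormedAddCommGroup E] {ι : Type*}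
    {C : AddSubgroup (Lp E p μ)}
    (t : Finset ι) {s : ι → Set α} (hs : ∀ i, MeasurableSet (s i)) (hμs : ∀ i, μ (s i) ≠ ∞)
    (hd : (t : Set ι).PairwiseDisjoint s) (c : E)
    (h : ∀ i ∈ t, indicatorConstLp p (hs i) (hμs i) c ∈ C) :
    indicatorConstLp p (t.measurableSet_biUnion fun i _ => hs i)
      (measure_biUnion_lt_top t.finite_toSet fun i _ => (hμs i).lt_top).ne c ∈ C := by
  classical
  induction t using Finset.induction_on with
  | empty => simp
  | insert i t hi ih =>
    simp only [Finset.set_biUnion_insert]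
    rw [indicatorConstLp_disjoint_union (hs i) (t.measurableSet_biUnion fun i _ => hs i) (hμs i)
      (measure_biUnion_lt_top t.finite_toSet fun i _ => (hμs i).lt_top).ne
      (disjoint_iUnion₂_right.2 fun j hj => hd (t.mem_insert_self i) (t.mem_insert_of_mem hj)
        (ne_of_mem_of_not_mem hj hi).symm) c]
    exact C.add_mem (h i (t.mem_insert_self i))
      (ih (hd.subset (t.subset_insert i)) fun j hj => h j (t.mem_insert_of_mem hj))

end MeasureTheory

section Besicovitch

variable {α : Type*} [MetricSpace α] [MeasurableSpace α] [OpensMeasurableSpace α]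

theorem tendsto_measure_closedBall_sdiff_closedBall (μ : Measure α) [IsFiniteMeasure μ]
    (c : α) (r : ℝ) :
    Tendsto (fun R => μ (closedBall c R \ closedBall c r)) (𝓝[>] r) (𝓝 0) := by
  have h := tendsto_measure_biInter_gt (μ := μ) (a := r)
    (s := fun R => closedBall c R \ closedBall c r)
    (fun _ _ => (measurableSet_closedBall.diff measurableSet_closedBall).nullMeasurableSet)
    (fun _ _ _ hij => sdiff_subset_sdiff_left (closedBall_subset_closedBall hij))
    ⟨r + 1, by linarith, measure_ne_top μ _⟩
  have hempty : (⋂ R > r, closedBall c R \ closedBall c r) = ∅ := by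
    refine eq_empty_of_forall_notMem fun x hx => (mem_iInter₂.1 hx (r + 1) (by linarith)).2 ?_
    rw [← biInter_gt_closedBall c r]
    exact mem_iInter₂.2 fun R hR => (mem_iInter₂.1 hx R hR).1
  rwa [hempty, measure_empty] at h

theorem exists_finset_pairwiseDisjoint_closedBall_measure_sdiff_lt [SecondCountableTopology α]
    [HasBesicovitchCovering α] (μ : Measure α) [IsFiniteMeasure μ] {U : Set α} (hU : IsOpen U)
    {ε : ℝ≥0∞} (hε : 0 < ε) :
    ∃ (t : Finset α) (r : α → ℝ), (t : Set α).PairwiseDisjoint (fun x => closedBall x (r x)) ∧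
      (∀ x ∈ t, closedBall x (r x) ⊆ U) ∧ μ (U \ ⋃ x ∈ t, closedBall x (r x)) < ε := by
  choose! R hR hRU using fun x (hx : x ∈ U) => Metric.isOpen_iff.1 hU x hx
  obtain ⟨T, r, hTc, hTU, hr, hcov, hdisj⟩ :=
    Besicovitch.exists_disjoint_closedBall_covering_ae μ (fun _ => Ioi 0) U
      (fun _ _ δ hδ => ⟨δ / 2, half_pos hδ, half_pos hδ, half_lt_self hδ⟩) R hR
  have hsub : ∀ x ∈ T, closedBall x (r x) ⊆ U := fun x hx =>
    (closedBall_subset_ball (hr x hx).2.2).trans (hRU x (hTU hx))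
  have : Countable T := hTc.to_subtype
  have hlim := tendsto_measure_iInter_atTop (μ := μ) (ι := Finset T)
    (s := fun F => U \ ⋃ x ∈ F, closedBall x.1 (r x))
    (fun F => (hU.measurableSet.diff
      (F.measurableSet_biUnion fun x _ => measurableSet_closedBall)).nullMeasurableSet)
    (fun F G hFG => sdiff_subset_sdiff_right (biUnion_subset_biUnion_left hFG))
    ⟨∅, measure_ne_top μ _⟩
  have hinter : (⋂ F : Finset T, U \ ⋃ x ∈ F, closedBall x.1 (r x)) =
      U \ ⋃ x ∈ T, closedBall x (r x) := by
    ext y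
    simp only [mem_iInter, Set.mem_sdiff, mem_iUnion, not_exists]
    exact ⟨fun h => ⟨(h ∅).1, fun x hx => (h {⟨x, hx⟩}).2 ⟨x, hx⟩ (Finset.mem_singleton_self _)⟩,
      fun h F => ⟨h.1, fun x _ => h.2 x x.2⟩⟩
  rw [Function.comp_def, hinter, hcov] at hlim
  obtain ⟨F, hF⟩ := (hlim.eventually (gt_mem_nhds hε)).exists
  classical
  have hFT : ((F.image Subtype.val : Finset α) : Set α) ⊆ T := by simp
  refine ⟨F.image Subtype.val, r, hdisj.subset hFT, fun x hx => hsub x (hFT hx), ?_⟩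
  simpa [Finset.set_biUnion_finset_image] using hF

end Besicovitch

namespace AdderNet

variable {E : Type*} [NormedAddCommGroup E]

def neuron (w : E) (b : ℝ) (x : E) : ℝ := max (‖w - x‖ + b) 0

variable (E) in
def neuronSpan : Submodule ℝ (E → ℝ) :=
  Submodule.span ℝ (range fun q : E × ℝ => neuron q.1 q.2)

theorem neuron_mem_neuronSpan (w : E) (b : ℝ) : neuron w b ∈ neuronSpan E :=
  Submodule.subset_span ⟨(w, b), rfl⟩

theorem continuous_neuron (w : E) (b : ℝ) : Continuous (neuron w b) :=
  (((continuous_const.sub continuous_id).norm).add continuous_const).max continuous_const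

noncomputable def plateau (c : E) (r R : ℝ) : E → ℝ :=
  neuron c 1 - neuron c 0 + (R - r)⁻¹ • (neuron c (-R) - neuron c (-r))

theorem plateau_mem_neuronSpan (c : E) (r R : ℝ) : plateau c r R ∈ neuronSpan E := by
  have h := neuron_mem_neuronSpan (E := E) c
  exact (Submodule.add_mem _ (Submodule.sub_mem _ (h 1) (h 0))
    (Submodule.smul_mem _ _ (Submodule.sub_mem _ (h _) (h _))))

theorem continuous_plateau (c : E) (r R : ℝ) : Continuous (plateau c r R) := by
  have h := continuous_neuron c
  exact ((h 1).sub (h 0)).add (((h _).sub (h _)).const_smul _)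

theorem plateau_apply (c : E) (r R : ℝ) (x : E) :
    plateau c r R x = 1 + (max (‖c - x‖ - R) 0 - max (‖c - x‖ - r) 0) / (R - r) := by
  have h0 : max (‖c - x‖ + 0) 0 = ‖c - x‖ := by simp
  have h1 : max (‖c - x‖ + 1) 0 = ‖c - x‖ + 1 := max_eq_left (by positivity)
  simp only [plateau, neuron, Pi.add_apply, Pi.sub_apply, Pi.smul_apply, smul_eq_mul, h0, h1,
    ← sub_eq_add_neg]
  ring

theorem abs_indicator_closedBall_sub_plateau_le (c : E) {r R : ℝ} (hrR : r < R) (x : E) :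
    |(closedBall c r).indicator 1 x - plateau c r R x| ≤
      (closedBall c R \ closedBall c r).indicator 1 x := by
  have hRr : 0 < R - r := sub_pos.2 hrR
  have hmem : ∀ ρ, x ∈ closedBall c ρ ↔ ‖c - x‖ ≤ ρ := fun ρ => by
    rw [mem_closedBall', dist_eq_norm]
  rw [plateau_apply]
  by_cases hr : ‖c - x‖ ≤ r
  · rw [max_eq_right (by linarith), max_eq_right (by linarith),
      indicator_of_mem ((hmem r).2 hr), indicator_of_notMem fun h => h.2 ((hmem r).2 hr)]
    simp
  rw [indicator_of_notMem (mt (hmem r).1 hr)]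
  by_cases hR : ‖c - x‖ ≤ R
  · rw [max_eq_right (by linarith), max_eq_left (by linarith),
      indicator_of_mem (show x ∈ closedBall c R \ closedBall c r from
        ⟨(hmem R).2 hR, mt (hmem r).1 hr⟩),
      Pi.one_apply, zero_sub, zero_sub, neg_div, abs_le]
    have hD : (‖c - x‖ - r) / (R - r) ≤ 1 := (div_le_one hRr).2 (by linarith)
    have hD' : 0 ≤ (‖c - x‖ - r) / (R - r) := div_nonneg (by linarith) hRr.le
    constructor <;> linarith
  · rw [max_eq_left (by linarith), max_eq_left (by linarith),
      indicator_of_notMem fun h => hR ((hmem R).1 h.1),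
      show ‖c - x‖ - R - (‖c - x‖ - r) = -(R - r) by ring, neg_div, div_self hRr.ne']
    simp

theorem abs_plateau_le_two (c : E) {r R : ℝ} (hrR : r < R) (x : E) : |plateau c r R x| ≤ 2 := by
  have hRr : 0 < R - r := sub_pos.2 hrR
  have h := abs_max_sub_max_le_abs (‖c - x‖ - R) (‖c - x‖ - r) 0
  rw [show ‖c - x‖ - R - (‖c - x‖ - r) = -(R - r) by ring, abs_neg, abs_of_pos hRr] at h
  rw [plateau_apply]
  calc _ ≤ |1| + |(max (‖c - x‖ - R) 0 - max (‖c - x‖ - r) 0) / (R - r)| := abs_add_le _ _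
    _ ≤ 1 + 1 := by
      rw [abs_one, abs_div, abs_of_pos hRr]
      gcongr
      exact (div_le_one hRr).2 h
    _ = 2 := one_add_one_eq_two

variable [MeasurableSpace E] [BorelSpace E] {p : ℝ≥0∞} [Fact (1 ≤ p)] (μ : Measure E)
  [IsFiniteMeasure μ]

theorem indicatorConstLp_closedBall_mem (hp : p ≠ ∞) (c : E) (r : ℝ) :
    indicatorConstLp p measurableSet_closedBall (measure_ne_top μ (closedBall c r)) (1 : ℝ) ∈
      ((neuronSpan E).toLp p μ).topologicalClosure := by
  have hp0 : 0 < 1 / p.toReal :=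
    one_div_pos.2 (ENNReal.toReal_pos (one_pos.trans_le Fact.out).ne' hp)
  have hshell : Tendsto (fun R => μ (closedBall c R \ closedBall c r) ^ (1 / p.toReal))
      (𝓝[>] r) (𝓝 0) := by
    have h := ((ENNReal.continuous_rpow_const (y := 1 / p.toReal)).tendsto 0).comp
      (tendsto_measure_closedBall_sdiff_closedBall μ c r)
    rwa [ENNReal.zero_rpow_of_pos hp0] at h
  refine EMetric.mem_closure_iff.2 fun ε hε => ?_
  obtain ⟨R, hR, hrR⟩ := ((hshell.eventually (gt_mem_nhds hε)).and self_mem_nhdsWithin).exists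
  have hmem : MemLp (plateau c r R) p μ :=
    MemLp.of_bound (continuous_plateau c r R).aestronglyMeasurable 2
      (Eventually.of_forall fun x => abs_plateau_le_two c hrR x)
  refine ⟨hmem.toLp _, ⟨_, plateau_mem_neuronSpan c r R, hmem.coeFn_toLp⟩, ?_⟩
  rw [indicatorConstLp, Lp.edist_toLp_toLp]
  calc eLpNorm ((closedBall c r).indicator (fun _ => (1 : ℝ)) - plateau c r R) p μ
      ≤ eLpNorm ((closedBall c R \ closedBall c r).indicator (fun _ => (1 : ℝ))) p μ :=
        eLpNorm_mono_real fun x => by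
          simpa [Pi.one_def] using abs_indicator_closedBall_sub_plateau_le c hrR x
    _ = μ (closedBall c R \ closedBall c r) ^ (1 / p.toReal) := by
        rw [eLpNorm_indicator_const (measurableSet_closedBall.diff measurableSet_closedBall)
          (one_pos.trans_le Fact.out).ne' hp, enorm_one, one_mul]
    _ < ε := hR

variable [NormedSpace ℝ E] [FiniteDimensional ℝ E]

theorem topologicalClosure_neuronSpan_toLp (hp : p ≠ ∞) :
    ((neuronSpan E).toLp p μ).topologicalClosure = ⊤ := by
  set C := ((neuronSpan E).toLp p μ).topologicalClosure
  have hC : IsClosed (C : Set (Lp ℝ p μ)) := Submodule.isClosed_topologicalClosure _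
  have hopen : ∀ U (hU : IsOpen U),
      indicatorConstLp p hU.measurableSet (measure_ne_top μ U) (1 : ℝ) ∈ C := by
    intro U hU
    refine indicatorConstLp_mem_of_forall_measure_symmDiff_lt hp hC _ _ 1 fun ε hε => ?_
    obtain ⟨t, r, hdisj, hsub, hlt⟩ :=
      exists_finset_pairwiseDisjoint_closedBall_measure_sdiff_lt μ hU hε
    refine ⟨_, _, _, indicatorConstLp_biUnion_mem (C := C.toAddSubgroup) t
      (fun x => measurableSet_closedBall) (fun x => measure_ne_top μ _) hdisj 1
      fun x _ => indicatorConstLp_closedBall_mem μ hp x (r x), ?_⟩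
    rwa [symmDiff_of_le (iUnion₂_subset hsub)]
  refine Submodule.eq_top_of_indicatorConstLp_one_mem hp hC fun s hs _ => ?_
  refine indicatorConstLp_mem_of_forall_measure_symmDiff_lt hp hC hs _ 1 fun ε hε => ?_
  obtain ⟨U, hsU, hU, -, hUs⟩ := hs.exists_isOpen_sdiff_lt (measure_ne_top μ s) hε.ne'
  exact ⟨U, hU.measurableSet, measure_ne_top μ U, hopen U hU, by rwa [symmDiff_of_ge hsU]⟩

theorem exists_integral_abs_sub_sum_neuron_le {f : E → ℝ} (hf : Integrable f μ) {ε : ℝ}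
    (hε : 0 < ε) :
    ∃ (t : ℕ) (a b : Fin t → ℝ) (w : Fin t → E),
      ∫ x, |f x - ∑ i, a i * neuron (w i) (b i) x| ∂μ ≤ ε := by
  have hf1 : hf.toL1 f ∈ ((neuronSpan E).toLp 1 μ).topologicalClosure := by
    rw [topologicalClosure_neuronSpan_toLp μ ENNReal.one_ne_top]
    trivial
  obtain ⟨F, ⟨g, hg, hFg⟩, hdist⟩ := Metric.mem_closure_iff.1 hf1 ε hε
  obtain ⟨t, a, v, rfl⟩ := Submodule.mem_span_set'.1 hg
  choose q hq using fun i => (v i).2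
  refine ⟨t, a, fun i => (q i).2, fun i => (q i).1, ?_⟩
  rw [dist_eq_norm, L1.norm_eq_integral_norm] at hdist
  refine le_of_eq_of_le (integral_congr_ae ?_) hdist.le
  filter_upwards [Lp.coeFn_sub (hf.toL1 f) F, hf.coeFn_toL1, hFg] with x hsub hfx hFx
  rw [hsub, Pi.sub_apply, hfx, hFx]
  simp [← hq, neuron, Finset.sum_apply]

end AdderNet

/-- Theorem 1 (universal approximation of two-layer AdderNets): functions of the form
`x ↦ Σᵢ aᵢ · ReLU(‖Wᵢ - x‖₁ + bᵢ)` are dense in `L¹(K)` for every compact `K ⊆ ℝ^d`. -/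
theorem addernet_two_layer_universal_approximation
    (d : ℕ) (K : Set (Fin d → ℝ)) (hK : IsCompact K)
    (f : (Fin d → ℝ) → ℝ) (hf : IntegrableOn f K volume) :
    ∀ ε > 0, ∃ (t : ℕ) (a b : Fin t → ℝ) (W : Fin t → Fin d → ℝ),
      (∫ x in K, |f x - ∑ i, a i * max ((∑ j, |W i j - x j|) + b i) 0|) ≤ ε := by
  intro ε hε
  -- `Fin d → ℝ` carries the sup norm; the sums `∑ j, |W i j - x j|` are the norm of `PiLp 1`.
  have : IsFiniteMeasure (volume.restrict K) := isFiniteMeasure_restrict.2 hK.measure_lt_top.ne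
  set e := MeasurableEquiv.toLp 1 (Fin d → ℝ)
  have hf' : Integrable (f ∘ e.symm) ((volume.restrict K).map e) :=
    (integrable_map_equiv e _).2 hf
  obtain ⟨t, a, b, w, hfg⟩ := AdderNet.exists_integral_abs_sub_sum_neuron_le _ hf' hε
  refine ⟨t, a, b, fun i => (w i).ofLp, ?_⟩
  rw [integral_map_equiv] at hfg
  simpa [e, AdderNet.neuron, PiLp.norm_eq_of_L1] using hfg
end

section
/- Lemma 1: Let d, t ∈ ℕ, let K ⊆ ℝ^d be a compact set, and let a₁,…,a_t, b₁,…,b_t ∈ ℝ and W₁,…,W_t ∈ ℝ^d. Define g(x) = Σ_{i=1}^t aᵢ · ReLU(‖Wᵢ − x‖₁ + bᵢ). Then there exist adder layers L¹: ℝ^d → ℝ^t and L²: ℝ^t → ℝ such that for all x ∈ K, L²(ReLU(L¹(x))) = g(x), where ReLU is applied componentwise. That is, the set of functions g of this form is representable by two-layer AdderNets on K. -/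
/-- An adder layer with input dimension `p` and output dimension `q`:
`L(x)ᵢ = aᵢ · ‖Wᵢ - x‖₁ + bᵢ`. -/
def IsAdderLayer {p q : ℕ} (L : (Fin p → ℝ) → Fin q → ℝ) : Prop :=
  ∃ (W : Fin q → Fin p → ℝ) (a b : Fin q → ℝ),
    ∀ (x : Fin p → ℝ) (i : Fin q), L x i = a i * (∑ j, |W i j - x j|) + b i

/-- Lemma 1: every function `g(x) = Σᵢ aᵢ · ReLU(‖Wᵢ - x‖₁ + bᵢ)` is representable on a
compact set `K` by a two-layer AdderNet `L² ∘ ReLU ∘ L¹`. -/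
theorem addernet_represents_relu_sum
    (d t : ℕ) (K : Set (Fin d → ℝ)) (hK : IsCompact K)
    (a b : Fin t → ℝ) (W : Fin t → Fin d → ℝ) :
    ∃ (L1 : (Fin d → ℝ) → Fin t → ℝ) (L2 : (Fin t → ℝ) → Fin 1 → ℝ),
      IsAdderLayer L1 ∧ IsAdderLayer L2 ∧
      ∀ x ∈ K, L2 (fun i => max (L1 x i) 0) 0 =
        ∑ i, a i * max ((∑ j, |W i j - x j|) + b i) 0 := by
  have hcont : Continuous (fun x : Fin d → ℝ => fun i : Fin t =>
      max (|a i| * ((∑ j, |W i j - x j|) + b i)) 0) := by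
    apply continuous_pi
    intro i
    apply Continuous.max _ continuous_const
    apply Continuous.mul continuous_const
    apply Continuous.add _ continuous_const
    apply continuous_finset_sum
    intro j _
    exact (continuous_const.sub (continuous_apply j)).abs
  obtain ⟨C, hC⟩ := hK.exists_bound_of_continuousOn hcont.continuousOn
  set M : ℝ := max C 0 with hMdef
  have hM0 : (0:ℝ) ≤ M := le_max_right _ _
  have hbound : ∀ x ∈ K, ∀ i,
      max (|a i| * ((∑ j, |W i j - x j|) + b i)) 0 ≤ M := by
    intro x hx i
    have h1 := hC x hx
    have h2 := norm_le_pi_norm (fun i : Fin t =>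
      max (|a i| * ((∑ j, |W i j - x j|) + b i)) 0) i
    calc max (|a i| * ((∑ j, |W i j - x j|) + b i)) 0
        ≤ ‖max (|a i| * ((∑ j, |W i j - x j|) + b i)) 0‖ := le_abs_self _
      _ ≤ C := le_trans h2 h1
      _ ≤ M := le_max_left _ _
  refine ⟨fun x i => |a i| * (∑ j, |W i j - x j|) + |a i| * b i,
    fun y _ => 1 * (∑ i, |(if 0 ≤ a i then -M else M) - y i|) + (-(t * M)),
    ⟨W, fun i => |a i|, fun i => |a i| * b i, fun x i => rfl⟩,
    ⟨fun _ i => if 0 ≤ a i then -M else M, fun _ => 1, fun _ => -(t*M),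
      fun y j => rfl⟩, ?_⟩
  intro x hx
  have hy : ∀ i, max (|a i| * (∑ j, |W i j - x j|) + |a i| * b i) 0
      = |a i| * max ((∑ j, |W i j - x j|) + b i) 0 := by
    intro i
    rw [← mul_add, mul_max_of_nonneg _ _ (abs_nonneg (a i)), mul_zero]
  have key : ∀ i, |(if 0 ≤ a i then -M else M)
        - max (|a i| * (∑ j, |W i j - x j|) + |a i| * b i) 0|
      = a i * max ((∑ j, |W i j - x j|) + b i) 0 + M := by
    intro i
    rw [hy i]
    set m : ℝ := max ((∑ j, |W i j - x j|) + b i) 0 with hm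
    have hm0 : 0 ≤ m := le_max_right _ _
    have hle : |a i| * m ≤ M := by
      rw [hm, mul_max_of_nonneg _ _ (abs_nonneg (a i)), mul_zero]
      exact hbound x hx i
    by_cases h : 0 ≤ a i
    · simp only [h, if_true]
      rw [abs_of_nonpos (by nlinarith [abs_nonneg (a i)]), abs_of_nonneg h]
      ring
    · simp only [h, if_false]
      have ha : |a i| = -a i := abs_of_neg (not_le.mp h)
      rw [ha] at hle ⊢
      rw [abs_of_nonneg (by nlinarith)]
      ring
  simp only [key, one_mul]
  rw [Finset.sum_add_distrib, Finset.sum_const, Finset.card_univ,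
    Fintype.card_fin, nsmul_eq_mul]
  ring
end

section
/- Lemma 2: Let d, m ∈ ℕ, let K ⊆ ℝ^d be a compact set, let A ∈ ℝ^m, and let B be an m×d matrix each of whose entries is 0 or 1. Define the linear map C: ℝ^d → ℝ^m by C(x)_i = A_i · Σ_{j=1}^d B_{ij} x_j. Then there exist adder layers L₁: ℝ^d → ℝ^{2m+2} and L₂: ℝ^{2m+2} → ℝ^m such that L₂(L₁(x)) = C(x) for all x ∈ K. That is, C can be represented on K by a two-layer AdderNet with 2m+2 hidden units. -/
/-- Lemma 2: a linear map `C(x)ᵢ = Aᵢ · Σⱼ Bᵢⱼ xⱼ` with 0/1 matrix `B` can be represented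
on a compact set `K` by a two-layer AdderNet with `2m + 2` hidden units. -/
theorem addernet_represents_zero_one_linear_map
    (d m : ℕ) (K : Set (Fin d → ℝ)) (hK : IsCompact K)
    (A : Fin m → ℝ) (B : Fin m → Fin d → ℝ) (hB : ∀ i j, B i j = 0 ∨ B i j = 1) :
    ∃ (L1 : (Fin d → ℝ) → Fin (2 * m + 2) → ℝ) (L2 : (Fin (2 * m + 2) → ℝ) → Fin m → ℝ),
      IsAdderLayer L1 ∧ IsAdderLayer L2 ∧
      ∀ x ∈ K, ∀ i : Fin m, L2 (L1 x) i = A i * ∑ j, B i j * x j := by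
  obtain ⟨R₀, hR₀⟩ := hK.isBounded.subset_closedBall 0
  set M : ℝ := max R₀ 0 with hMdef
  have hM0 : 0 ≤ M := le_max_right _ _
  have hxM : ∀ x ∈ K, ∀ j, |x j| ≤ M := by
    intro x hx j
    have h1 : ‖x‖ ≤ R₀ := by simpa [dist_zero_right] using hR₀ hx
    exact le_trans (le_trans (norm_le_pi_norm x j) h1) (le_max_left _ _)
  set R : ℝ := d * M + 1 with hRdef
  have hR0 : 0 < R := by positivity
  -- first layer weights
  set W1 : Fin (2*m+2) → Fin d → ℝ := fun k j =>
    if hk : (k:ℕ) < m then (if B ⟨k, hk⟩ j = 1 then -M else M)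
    else if hk2 : (k:ℕ) < 2*m then (if B ⟨(k:ℕ) - m, by omega⟩ j = 1 then -M else M)
    else M with hW1
  set L1 : (Fin d → ℝ) → Fin (2*m+2) → ℝ :=
    fun x k => (1/2 : ℝ) * (∑ j, |W1 k j - x j|) + 0 with hL1
  set ε : Fin m → Fin (2*m+2) → ℝ := fun i k =>
    if (k:ℕ) < m then 1 else if (k:ℕ) < 2*m then (if (k:ℕ) = m + (i:ℕ) then 1 else -1) else -1
    with hε
  set L2 : (Fin (2*m+2) → ℝ) → Fin m → ℝ :=
    fun h i => (A i / 2) * (∑ k, |(-R) * ε i k - h k|) + (-(A i / 2) * ((2*m+2) * R)) with hL2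
  refine ⟨L1, L2, ⟨W1, fun _ => 1/2, fun _ => 0, fun _ _ => rfl⟩,
    ⟨fun i k => (-R) * ε i k, fun i => A i / 2, fun i => -(A i / 2) * ((2*m+2) * R),
      fun _ _ => rfl⟩, ?_⟩
  intro x hx i
  have hxj : ∀ j, |x j| ≤ M := hxM x hx
  have hW1abs : ∀ k j, |W1 k j| = M := by
    intro k j
    simp only [hW1]
    split_ifs <;> simp [abs_of_nonneg hM0, abs_of_nonpos (neg_nonpos.mpr hM0)]
  -- bound on hidden values
  have hbound : ∀ k, |L1 x k| ≤ R := by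
    intro k
    have h1 : (0:ℝ) ≤ ∑ j, |W1 k j - x j| := Finset.sum_nonneg fun j _ => abs_nonneg _
    have h2 : ∑ j, |W1 k j - x j| ≤ ∑ j : Fin d, 2 * M := by
      apply Finset.sum_le_sum
      intro j _
      calc |W1 k j - x j| ≤ |W1 k j| + |x j| := abs_sub _ _
        _ ≤ M + M := add_le_add (le_of_eq (hW1abs k j)) (hxj j)
        _ = 2 * M := by ring
    simp only [Finset.sum_const, Finset.card_univ, Fintype.card_fin, nsmul_eq_mul] at h2
    rw [hL1]
    simp only [add_zero]
    rw [abs_of_nonneg (by positivity)]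
    rw [hRdef]
    nlinarith
  -- second layer terms
  have hεval : ∀ k, ε i k = 1 ∨ ε i k = -1 := by
    intro k; simp only [hε]; split_ifs <;> simp
  have key2 : ∀ k, |(-R) * ε i k - L1 x k| = ε i k * L1 x k + R := by
    intro k
    have hb := abs_le.mp (hbound k)
    rcases hεval k with he | he <;> rw [he]
    · rw [one_mul]
      have : (-R) * 1 - L1 x k = -(R + L1 x k) := by ring
      rw [this, abs_neg, abs_of_nonneg (by linarith)]
      ring
    · have : (-R) * (-1) - L1 x k = R - L1 x k := by ring
      rw [this, abs_of_nonneg (by linarith)]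
      ring
  -- values of hidden units
  set g : ℝ := (1/2 : ℝ) * ∑ j, (M - x j) with hg
  have hrowterm : ∀ (r : Fin m) (j : Fin d),
      |(if B r j = 1 then -M else M) - x j| = 2 * (B r j * x j) + (M - x j) := by
    intro r j
    have hxj' := abs_le.mp (hxj j)
    rcases hB r j with hb | hb <;> rw [hb]
    · have h0 : (0:ℝ) ≠ 1 := by norm_num
      rw [if_neg h0, abs_of_nonneg (by linarith [hxj'.2])]
      ring
    · rw [if_pos rfl]
      have : -M - x j = -(M + x j) := by ring
      rw [this, abs_neg, abs_of_nonneg (by linarith [hxj'.1])]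
      ring
  have hrow : ∀ (r : Fin m),
      (1/2:ℝ) * (∑ j, |(if B r j = 1 then -M else M) - x j|) = (∑ j, B r j * x j) + g := by
    intro r
    rw [Finset.sum_congr rfl (fun j _ => hrowterm r j), Finset.sum_add_distrib, hg,
      ← Finset.mul_sum]
    ring
  -- the net value function as ℕ → ℝ
    -- F k = value of hidden unit for row k (or g)
  set F : ℕ → ℝ := fun k => if hk : k < m then (∑ j, B ⟨k, hk⟩ j * x j) + g else g with hF
  have hval : ∀ k : Fin (2*m+2), L1 x k =
      if (k:ℕ) < m then F (k:ℕ) else if (k:ℕ) < 2*m then F ((k:ℕ) - m) else g := by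
    intro k
    rw [hL1]
    simp only [add_zero]
    by_cases hk : (k:ℕ) < m
    · simp only [hk, if_true, hF, dif_pos hk]
      have : ∀ j, W1 k j = if B ⟨(k:ℕ), hk⟩ j = 1 then -M else M := by
        intro j; simp only [hW1, dif_pos hk]
      rw [Finset.sum_congr rfl (fun j _ => by rw [this j])]
      exact hrow ⟨(k:ℕ), hk⟩
    · by_cases hk2 : (k:ℕ) < 2*m
      · have hkm : (k:ℕ) - m < m := by omega
        simp only [hk, if_false, hk2, if_true, hF, dif_pos hkm]
        have : ∀ j, W1 k j = if B ⟨(k:ℕ) - m, hkm⟩ j = 1 then -M else M := by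
          intro j; simp only [hW1, dif_neg hk, dif_pos hk2]
        rw [Finset.sum_congr rfl (fun j _ => by rw [this j])]
        exact hrow ⟨(k:ℕ) - m, hkm⟩
      · simp only [hk, if_false, hk2, if_false]
        have : ∀ j, W1 k j = M := by
          intro j; simp only [hW1, dif_neg hk, dif_neg hk2]
        rw [Finset.sum_congr rfl (fun j _ => by rw [this j]), hg]
        congr 1
        exact Finset.sum_congr rfl fun j _ => abs_of_nonneg (by linarith [(abs_le.mp (hxj j)).2])
  -- the ℕ-indexed summand for the key sum
  set G : ℕ → ℝ := fun k =>
    (if k < m then 1 else if k < 2*m then (if k = m + (i:ℕ) then 1 else -1) else -1) *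
    (if k < m then F k else if k < 2*m then F (k - m) else g) with hG
  have hGk : ∀ k : Fin (2*m+2), ε i k * L1 x k = G (k:ℕ) := by
    intro k
    rw [hval k, hG, hε]
  have hkey : ∑ k : Fin (2*m+2), ε i k * L1 x k = 2 * ∑ j, B i j * x j := by
    rw [Finset.sum_congr rfl (fun k _ => hGk k)]
    rw [Fin.sum_univ_eq_sum_range G (2*m+2)]
    have h2m2 : 2*m+2 = (2*m) + 1 + 1 := by ring
    rw [h2m2, Finset.sum_range_succ, Finset.sum_range_succ]
    have hG2m : G (2*m) = -g := by
      have h1 : ¬ (2*m < m) := by omega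
      have h2 : ¬ (2*m < 2*m) := by omega
      simp [hG, h1, h2]
    have hG2m1 : G (2*m+1) = -g := by
      have h1 : ¬ (2*m+1 < m) := by omega
      have h2 : ¬ (2*m+1 < 2*m) := by omega
      simp [hG, h1, h2]
    have hsplit : ∑ k ∈ Finset.range (2*m), G k =
        (∑ k ∈ Finset.range m, G k) + ∑ k ∈ Finset.range m, G (m + k) := by
      rw [← Finset.sum_range_add_sum_Ico G (by omega : m ≤ 2*m)]
      congr 1
      rw [Finset.sum_Ico_eq_sum_range]
      have h2mm : 2*m - m = m := by omega
      rw [h2mm]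
    rw [hsplit, hG2m, hG2m1]
    have hGlow : ∀ k ∈ Finset.range m, G k = F k := by
      intro k hk
      rw [Finset.mem_range] at hk
      simp [hG, hk, one_mul]
    have hGhigh : ∀ k ∈ Finset.range m, G (m + k) = (if k = (i:ℕ) then 1 else -1) * F k := by
      intro k hk
      rw [Finset.mem_range] at hk
      have h1 : ¬ (m + k < m) := by omega
      have h2 : m + k < 2*m := by omega
      have h3 : m + k - m = k := by omega
      have h4 : (m + k = m + (i:ℕ)) ↔ (k = (i:ℕ)) := by omega
      simp only [hG, h1, if_false, h2, if_true, h3, h4]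
    rw [Finset.sum_congr rfl hGlow, Finset.sum_congr rfl hGhigh]
    have hite : ∀ k ∈ Finset.range m,
        (if k = (i:ℕ) then 1 else -1) * F k = (if k = (i:ℕ) then 2 * F k else 0) - F k := by
      intro k _
      split_ifs <;> ring
    rw [Finset.sum_congr rfl hite, Finset.sum_sub_distrib,
      Finset.sum_ite_eq' (Finset.range m) (i:ℕ) (fun k => 2 * F k),
      if_pos (Finset.mem_range.mpr i.isLt)]
    have hFi : F (i:ℕ) = (∑ j, B i j * x j) + g := by
      rw [hF]
      simp only [dif_pos i.isLt, Fin.eta]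
    rw [hFi]
    ring
  -- finish
  rw [hL2]
  simp only
  rw [Finset.sum_congr rfl (fun k _ => key2 k), Finset.sum_add_distrib, Finset.sum_const,
    Finset.card_univ, Fintype.card_fin, nsmul_eq_mul, hkey]
  push_cast
  ring
end
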